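/- Let t ≥ 2 and m ≥ 1 be integers. The map sending a partition λ to the tuple (n₁(λ), n₂(λ), …, n_{t−1}(λ)) is a bijection from the set of (t, mt−1)-core partitions with distinct parts onto the set of tuples (x₁,…,x_{t−1}) of natural numbers with 0 ≤ x_i ≤ m for all 1 ≤ i ≤ t−2, x_i·x_{i+1} = 0 for all 1 ≤ i ≤ t−2, and 0 ≤ x_{t−1} ≤ m−1. -/

import Mathlib

/-!
A partition is determined by its β-set, and every finite set of positive integers is the β-set of
a partition. The hook lengths in row `i` are the differences `β_i - g` for the non-members
`g < β_i` of the β-set, so `λ` is a `u`-core exactly when its β-set is closed under `x ↦ x - u`;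
and `λ` has distinct parts exactly when its β-set contains no two consecutive integers.

On the `t`-abacus, a β-set closed under `x ↦ x - t` is determined by its bead counts
`n_1, …, n_{t-1}`, every runner being filled from the top. Such a set is also closed under
`x ↦ x - (mt - 1)` and free of consecutive integers iff no two adjacent runners both carry beads,
runners `r ≤ t - 2` carry at most `m` beads and runner `t - 1` at most `m - 1`: one bead more
would be moved by `mt - 1` to `r + 1`, next to the bead `r`, resp. to `0`. Conversely, under these
bounds all beads lie below `mt - 1`.
-/

/-- A partition: a finite weakly decreasing list of positive integers. -/
structure Partn where
  parts : List ℕ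
  pos : ∀ p ∈ parts, 0 < p
  sorted : parts.Pairwise (· ≥ ·)

namespace Partn

/-- The size of a partition: the sum of its parts. -/
def size (l : Partn) : ℕ := l.parts.sum

/-- The number of rows `k` (0-indexed) with `λ_k ≥ j` (the length of column `j`). -/
def colLen (l : Partn) (j : ℕ) : ℕ := (l.parts.filter (fun p => j ≤ p)).length

/-- The hook length of the box in row `i` (0-indexed) and column `j` (1-indexed):
`λ_i − j + #{k : λ_k ≥ j} − i + 1` (with 1-indexed rows). -/
def hook (l : Partn) (i j : ℕ) : ℕ :=
  (l.parts.getD i 0 - j) + (l.colLen j - (i + 1)) + 1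

/-- A partition is a `t`-core if none of its hook lengths is divisible by `t`. -/
def IsCore (t : ℕ) (l : Partn) : Prop :=
  ∀ i j : ℕ, i < l.parts.length → 1 ≤ j → j ≤ l.parts.getD i 0 → ¬ (t ∣ l.hook i j)

/-- A partition has distinct parts if its parts are strictly decreasing. -/
def DistinctParts (l : Partn) : Prop := l.parts.Pairwise (· > ·)

/-- The β-set of a partition: `{λ_i + ℓ − i : 1 ≤ i ≤ ℓ}` (1-indexed). -/
def betaSet (l : Partn) : Finset ℕ :=
  (Finset.range l.parts.length).image
    (fun i => l.parts.getD i 0 + (l.parts.length - 1 - i))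

/-- `nFn t i l` is the number of elements of the β-set of `l` congruent to `i` mod `t`. -/
def nFn (t i : ℕ) (l : Partn) : ℕ :=
  (l.betaSet.filter (fun x => x % t = i)).card

end Partn

open Finset

theorem List.lt_length_filter_le_iff {α : Type*} [LinearOrder α] {L : List α}
    (hL : L.Pairwise (· ≥ ·)) (a : α) (k : ℕ) :
    k < (L.filter (a ≤ ·)).length ↔ ∃ h : k < L.length, a ≤ L[k] := by
  induction L generalizing k with
  | nil => simp
  | cons b L ih =>
    rw [List.pairwise_cons] at hL
    by_cases hab : a ≤ b
    · rw [List.filter_cons_of_pos (by simpa using hab)]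
      cases k with
      | zero => simpa using hab
      | succ k => simpa using ih hL.2 k
    · have hnil : L.filter (a ≤ ·) = [] :=
        List.filter_eq_nil_iff.mpr fun c hc => by simpa using (hL.1 c hc).trans_lt (not_le.mp hab)
      rw [List.filter_cons_of_neg (by simpa using hab), hnil]
      cases k with
      | zero => simpa using hab
      | succ k =>
        simp only [List.length_nil, Nat.not_lt_zero, false_iff, not_exists]
        exact fun hk hak => hab (hak.trans (hL.1 _ (List.getElem_mem _)))

theorem Fin.monotone_sub_val_of_strictMono {n : ℕ} {e : Fin n → ℕ} (he : StrictMono e) :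
    Monotone fun k => e k - k := by
  cases n with
  | zero => exact fun a => a.elim0
  | succ n => ?_
  refine Fin.monotone_iff_le_succ.mpr fun k => ?_
  have := he k.castSucc_lt_succ
  simp only [Fin.val_castSucc, Fin.val_succ]
  omega

theorem Finset.one_le_orderEmbOfFin_sub_val {B : Finset ℕ} (h0 : 0 ∉ B) (k : Fin #B) :
    1 ≤ B.orderEmbOfFin rfl k - k := by
  have hmono := Fin.monotone_sub_val_of_strictMono (B.orderEmbOfFin rfl).strictMono
    (show (⟨0, Nat.zero_lt_of_lt k.isLt⟩ : Fin #B) ≤ k from Nat.zero_le _)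
  have hne : B.orderEmbOfFin rfl ⟨0, Nat.zero_lt_of_lt k.isLt⟩ ≠ 0 :=
    fun h => h0 (h ▸ orderEmbOfFin_mem B rfl _)
  simp only at hmono
  omega

theorem Nat.add_mul_div_mod_of_lt {r t : ℕ} (hr : r < t) (a : ℕ) :
    (r + t * a) / t = a ∧ (r + t * a) % t = r :=
  (Nat.div_mod_unique (by omega)).mpr ⟨rfl, hr⟩

theorem Finset.mem_iff_lt_card_of_isLowerSet {S : Finset ℕ} (hS : IsLowerSet (S : Set ℕ))
    (a : ℕ) : a ∈ S ↔ a < #S := by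
  constructor
  · intro ha
    have : range (a + 1) ⊆ S := fun b hb => hS (Nat.lt_succ_iff.mp (mem_range.mp hb)) ha
    simpa using card_le_card this
  · intro ha
    by_contra hna
    have : S ⊆ range a := fun b hb => mem_range.mpr (lt_of_not_ge fun hab => hna (hS hab hb))
    have := card_le_card this
    rw [card_range] at this
    omega

def ClosedUnderSub (u : ℕ) (B : Finset ℕ) : Prop := ∀ x ∈ B, u ≤ x → x - u ∈ B

theorem ClosedUnderSub.sub_mul_mem {u : ℕ} {B : Finset ℕ} (hB : ClosedUnderSub u B) {x : ℕ}
    (hx : x ∈ B) (d : ℕ) (hd : u * d ≤ x) : x - u * d ∈ B := by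
  induction d with
  | zero => simpa using hx
  | succ d ih =>
    have h := hB _ (ih (by nlinarith)) (by rw [Nat.mul_succ] at hd; omega)
    rwa [Nat.sub_sub, ← Nat.mul_succ] at h

theorem ClosedUnderSub.add_mul_mem_iff {t : ℕ} {B : Finset ℕ} (hB : ClosedUnderSub t B)
    {r : ℕ} (hr : r < t) (a : ℕ) : r + t * a ∈ B ↔ a < #{x ∈ B | x % t = r} := by
  have hdivmod := Nat.add_mul_div_mod_of_lt hr
  have hdecomp : ∀ x, x % t = r → r + t * (x / t) = x := fun x hx => hx ▸ Nat.mod_add_div x t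
  set S := {x ∈ B | x % t = r}.image (· / t)
  have hS : ∀ a, a ∈ S ↔ r + t * a ∈ B := by
    intro a
    simp only [S, mem_image, mem_filter]
    constructor
    · rintro ⟨x, ⟨hx, hxr⟩, rfl⟩
      rwa [hdecomp x hxr]
    · exact fun h => ⟨_, ⟨h, (hdivmod a).2⟩, (hdivmod a).1⟩
  have hcard : #S = #{x ∈ B | x % t = r} := card_image_of_injOn fun x hx y hy hxy => by
    simp only [mem_coe, mem_filter] at hx hy hxy
    rw [← hdecomp x hx.2, ← hdecomp y hy.2, hxy]
  have hlower : IsLowerSet (S : Set ℕ) := fun a b hba ha => by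
    rw [mem_coe, hS] at ha ⊢
    have := hB.sub_mul_mem ha (a - b) (by rw [Nat.mul_sub]; omega)
    rwa [show r + t * a - t * (a - b) = r + t * b by
      rw [Nat.mul_sub]; have := Nat.mul_le_mul_left t hba; omega] at this
  rw [← hS, ← hcard]
  exact mem_iff_lt_card_of_isLowerSet hlower a

/-- The β-set with `n r` beads on runner `r` of the `t`-abacus for `0 < r < t` (pushed to the
top) and none on runner `0`. -/
def abacus (t : ℕ) (n : ℕ → ℕ) : Finset ℕ :=
  (Ioo 0 t).biUnion fun r => (range (n r)).image fun a => r + t * a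

section Abacus

variable {t : ℕ} {n : ℕ → ℕ}

theorem mem_abacus {z : ℕ} :
    z ∈ abacus t n ↔ ∃ r, (0 < r ∧ r < t) ∧ ∃ a < n r, r + t * a = z := by
  simp [abacus]

theorem add_mul_mem_abacus {r : ℕ} (hr0 : 0 < r) (hrt : r < t) (a : ℕ) :
    r + t * a ∈ abacus t n ↔ a < n r := by
  rw [mem_abacus]
  constructor
  · rintro ⟨r', ⟨-, hrt'⟩, a', ha', h⟩
    have h1 := Nat.add_mul_div_mod_of_lt hrt' a'
    have h2 := Nat.add_mul_div_mod_of_lt hrt a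
    rw [h] at h1
    obtain ⟨rfl, rfl⟩ : a' = a ∧ r' = r := ⟨h1.1.symm.trans h2.1, h1.2.symm.trans h2.2⟩
    exact ha'
  · exact fun ha => ⟨r, ⟨hr0, hrt⟩, a, ha, rfl⟩

theorem mul_notMem_abacus (a : ℕ) : t * a ∉ abacus t n := by
  rw [mem_abacus]
  rintro ⟨r, ⟨hr0, hrt⟩, b, -, h⟩
  have := (Nat.add_mul_div_mod_of_lt hrt b).2
  rw [h, Nat.mul_mod_right] at this
  omega

theorem zero_notMem_abacus : 0 ∉ abacus t n := by
  simpa using mul_notMem_abacus (t := t) (n := n) 0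

theorem closedUnderSub_abacus : ClosedUnderSub t (abacus t n) := by
  intro z hz htz
  obtain ⟨r, ⟨hr0, hrt⟩, a, ha, rfl⟩ := mem_abacus.mp hz
  have ha0 : 0 < a := Nat.pos_of_ne_zero fun h => by subst h; omega
  refine mem_abacus.mpr ⟨r, ⟨hr0, hrt⟩, a - 1, by omega, ?_⟩
  have := Nat.le_mul_of_pos_right t ha0
  rw [Nat.mul_sub_one]
  omega

theorem abacus_congr {n' : ℕ → ℕ} (h : ∀ r, 0 < r → r < t → n r = n' r) :
    abacus t n = abacus t n' :=
  biUnion_congr rfl fun r hr => by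
    rw [mem_Ioo] at hr
    rw [h r hr.1 hr.2]

theorem card_filter_mod_abacus {r : ℕ} (hr0 : 0 < r) (hrt : r < t) :
    #{x ∈ abacus t n | x % t = r} = n r :=
  eq_of_forall_lt_iff fun a => by
    rw [← closedUnderSub_abacus.add_mul_mem_iff hrt, add_mul_mem_abacus hr0 hrt]

theorem eq_abacus_of_closedUnderSub (ht : 0 < t) {B : Finset ℕ} (hB : ClosedUnderSub t B)
    (h0 : 0 ∉ B) : B = abacus t fun r => #{x ∈ B | x % t = r} := by
  ext z
  rw [mem_abacus]
  constructor
  · intro hz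
    have hmod : z % t ∈ B := by
      have := hB.sub_mul_mem hz (z / t) (Nat.mul_div_le z t)
      rwa [show z - t * (z / t) = z % t by have := Nat.mod_add_div z t; omega] at this
    refine ⟨z % t, ⟨Nat.pos_of_ne_zero fun h => h0 (h ▸ hmod), Nat.mod_lt z ht⟩, z / t, ?_,
      Nat.mod_add_div z t⟩
    exact (hB.add_mul_mem_iff (Nat.mod_lt z ht) _).mp (by rwa [Nat.mod_add_div])
  · rintro ⟨r, ⟨-, hrt⟩, a, ha, rfl⟩
    exact (hB.add_mul_mem_iff hrt a).mpr ha

end Abacus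

/-- The conditions on the bead counts `n 1, …, n (t-1)` of a `(t, mt-1)`-core with distinct
parts. -/
def IsAdmissible (t m : ℕ) (n : ℕ → ℕ) : Prop :=
  (∀ r, 0 < r → r + 1 < t → n r ≤ m ∧ n r * n (r + 1) = 0) ∧ n (t - 1) ≤ m - 1

theorem IsAdmissible.lt_of_mem_abacus {t m : ℕ} (hm : 1 ≤ m) {n : ℕ → ℕ}
    (hn : IsAdmissible t m n) {z : ℕ} (hz : z ∈ abacus t n) : z < m * t - 1 := by
  have hmt : t * (m - 1) + t = m * t := by
    rw [← Nat.mul_succ, Nat.succ_eq_add_one, Nat.sub_add_cancel hm, mul_comm]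
  obtain ⟨r, ⟨hr0, hrt⟩, a, ha, rfl⟩ := mem_abacus.mp hz
  rcases Nat.lt_or_ge (r + 1) t with hr1 | hr1
  · have := Nat.mul_le_mul_left t (show a ≤ m - 1 by have := (hn.1 r hr0 hr1).1; omega)
    omega
  · have := Nat.mul_le_mul_left t (show a + 1 ≤ m - 1 by
      have := hn.2
      rw [show t - 1 = r by omega] at this
      omega)
    rw [Nat.mul_succ] at this
    omega

theorem isAdmissible_iff_closedUnderSub_and_noConsec {t m : ℕ} (ht : 2 ≤ t) (hm : 1 ≤ m)
    (n : ℕ → ℕ) : IsAdmissible t m n ↔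
      ClosedUnderSub (m * t - 1) (abacus t n) ∧ ∀ x ∈ abacus t n, x + 1 ∉ abacus t n := by
  constructor
  · intro hn
    refine ⟨fun z hz hz' => absurd hz' (not_le.mpr (hn.lt_of_mem_abacus hm hz)),
      fun z hz hz1 => ?_⟩
    obtain ⟨r, ⟨hr0, hrt⟩, a, ha, rfl⟩ := mem_abacus.mp hz
    rcases Nat.lt_or_ge (r + 1) t with hr1 | hr1
    · rw [add_right_comm, add_mul_mem_abacus (by omega) hr1] at hz1
      have := (hn.1 r hr0 hr1).2
      rw [Nat.mul_eq_zero] at this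
      omega
    · rw [show r + t * a + 1 = t * (a + 1) by rw [Nat.mul_succ]; omega] at hz1
      exact mul_notMem_abacus _ hz1
  · rintro ⟨hclosed, hnoConsec⟩
    have hmt := Nat.mul_le_mul hm ht
    have hrun : ∀ r, 0 < r → r < t → 0 < n r → r ∈ abacus t n := fun r hr0 hrt hn => by
      simpa using (add_mul_mem_abacus hr0 hrt 0).mpr hn
    refine ⟨fun r hr0 hr1 => ⟨?_, ?_⟩, ?_⟩
    · by_contra! h
      have h1 := hclosed _ ((add_mul_mem_abacus hr0 (by omega) m).mpr h)
        (by rw [mul_comm]; omega)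
      rw [show r + t * m - (m * t - 1) = r + 1 by rw [mul_comm]; omega] at h1
      exact hnoConsec r (hrun r hr0 (by omega) (by omega)) h1
    · by_contra h
      obtain ⟨h1, h2⟩ := mul_ne_zero_iff.mp h
      exact hnoConsec r (hrun r hr0 (by omega) (Nat.pos_of_ne_zero h1))
        (hrun (r + 1) (by omega) hr1 (Nat.pos_of_ne_zero h2))
    · by_contra! h
      have h1 := (add_mul_mem_abacus (by omega) (by omega : t - 1 < t) (m - 1)).mpr (by omega)
      rw [show t - 1 + t * (m - 1) = m * t - 1 by
        rw [Nat.mul_sub_one, mul_comm]; have := Nat.mul_le_mul_right t hm; omega] at h1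
      exact zero_notMem_abacus (by simpa using hclosed _ h1 le_rfl)

theorem isAdmissible_iff_forall_fin {t m : ℕ} (ht : 2 ≤ t) (n : ℕ → ℕ) :
    IsAdmissible t m n ↔
      (∀ i : Fin (t - 1), (i : ℕ) + 1 ≤ t - 2 → n (i + 1) ≤ m) ∧
        (∀ i j : Fin (t - 1), (j : ℕ) = (i : ℕ) + 1 → n (i + 1) * n (j + 1) = 0) ∧
        ∀ i : Fin (t - 1), (i : ℕ) + 1 = t - 1 → n (i + 1) ≤ m - 1 := by
  constructor
  · rintro ⟨hr, hlast⟩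
    refine ⟨fun i hi => (hr _ (by omega) (by omega)).1, fun i j hij => ?_,
      fun i hi => by rw [hi]; exact hlast⟩
    rw [hij]
    exact (hr _ (by omega) (by omega)).2
  · rintro ⟨hle, hmul, hlast⟩
    refine ⟨fun r hr0 hr1 => ?_, ?_⟩
    · have hr : r - 1 + 1 = r := by omega
      have := hle ⟨r - 1, by omega⟩ (by simp only; omega)
      have := hmul ⟨r - 1, by omega⟩ ⟨r, by omega⟩ (by simp only; omega)
      simp_all
    · simpa [show t - 2 + 1 = t - 1 by omega] using
        hlast ⟨t - 2, by omega⟩ (by simp only; omega)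

namespace Partn

@[ext]
theorem ext {l l' : Partn} (h : l.parts = l'.parts) : l = l' := by
  cases l; cases l'; cases h; rfl

variable (l : Partn)

theorem one_le_getD {i : ℕ} (hi : i < l.parts.length) : 1 ≤ l.parts.getD i 0 := by
  rw [List.getD_eq_getElem _ _ hi]
  exact l.pos _ (List.getElem_mem hi)

theorem getD_le_getD {i k : ℕ} (hik : i ≤ k) (hk : k < l.parts.length) :
    l.parts.getD k 0 ≤ l.parts.getD i 0 := by
  rw [List.getD_eq_getElem _ _ hk, List.getD_eq_getElem _ _ (hik.trans_lt hk)]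
  rcases hik.lt_or_eq with hik | rfl
  · exact List.pairwise_iff_getElem.mp l.sorted i k _ hk hik
  · rfl

theorem lt_colLen_iff (j k : ℕ) :
    k < l.colLen j ↔ k < l.parts.length ∧ j ≤ l.parts.getD k 0 := by
  rw [colLen, List.lt_length_filter_le_iff l.sorted]
  exact ⟨fun ⟨hk, h⟩ => ⟨hk, by rwa [List.getD_eq_getElem _ _ hk]⟩,
    fun ⟨hk, h⟩ => ⟨hk, by rwa [List.getD_eq_getElem _ _ hk] at h⟩⟩

theorem colLen_le (j : ℕ) : l.colLen j ≤ l.parts.length := List.length_filter_le _ _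

def beta (i : ℕ) : ℕ := l.parts.getD i 0 + (l.parts.length - 1 - i)

theorem beta_add_le {i k : ℕ} (hik : i ≤ k) (hk : k < l.parts.length) :
    l.beta k + (k - i) ≤ l.beta i := by
  have := l.getD_le_getD hik hk
  unfold beta
  omega

theorem strictAntiOn_beta : StrictAntiOn l.beta (Set.Iio l.parts.length) :=
  fun i _ k hk hik => by have := l.beta_add_le hik.le hk; omega

theorem betaSet_eq_image : l.betaSet = (range l.parts.length).image l.beta := rfl

theorem mem_betaSet {x : ℕ} : x ∈ l.betaSet ↔ ∃ i < l.parts.length, l.beta i = x := by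
  simp [betaSet_eq_image]

theorem beta_mem_betaSet {i : ℕ} (hi : i < l.parts.length) : l.beta i ∈ l.betaSet :=
  l.mem_betaSet.mpr ⟨i, hi, rfl⟩

theorem zero_notMem_betaSet : 0 ∉ l.betaSet := by
  rw [mem_betaSet]
  rintro ⟨i, hi, h⟩
  have := l.one_le_getD hi
  unfold beta at h
  omega

theorem card_betaSet : #l.betaSet = l.parts.length := by
  rw [betaSet_eq_image, card_image_of_injOn, card_range]
  simpa using l.strictAntiOn_beta.injOn

/-- The `j`-th smallest element of `ℕ ∖ β(λ)` (columns indexed from `1`); the hook lengths of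
row `i` are the differences `β_i - gap j`. -/
def gap (j : ℕ) : ℕ := j - 1 + (l.parts.length - l.colLen j)

theorem hook_eq_beta_sub_gap {i j : ℕ} (hi : i < l.parts.length) (hj1 : 1 ≤ j)
    (hj : j ≤ l.parts.getD i 0) : l.hook i j = l.beta i - l.gap j := by
  have := (l.lt_colLen_iff j i).mpr ⟨hi, hj⟩
  have := l.colLen_le j
  unfold hook beta gap
  omega

theorem gap_lt_beta {i j : ℕ} (hi : i < l.parts.length) (hj : j ≤ l.parts.getD i 0) :
    l.gap j < l.beta i := by
  have := (l.lt_colLen_iff j i).mpr ⟨hi, hj⟩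
  have := l.colLen_le j
  have := l.one_le_getD hi
  unfold beta gap
  omega

theorem gap_notMem_betaSet {j : ℕ} (hj : 1 ≤ j) : l.gap j ∉ l.betaSet := by
  rw [mem_betaSet]
  rintro ⟨k, hk, h⟩
  have := l.colLen_le j
  unfold beta gap at h
  by_cases hjk : j ≤ l.parts.getD k 0
  · have := (l.lt_colLen_iff j k).mpr ⟨hk, hjk⟩
    omega
  · have := mt (l.lt_colLen_iff j k).mp (by tauto)
    omega

theorem gap_strictMonoOn : StrictMonoOn l.gap (Set.Ici 1) := by
  intro j hj j' _ hjj
  have : l.colLen j' ≤ l.colLen j := le_of_forall_lt fun k hk => by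
    rw [lt_colLen_iff] at hk ⊢
    exact ⟨hk.1, hjj.le.trans hk.2⟩
  have := l.colLen_le j
  simp only [Set.mem_Ici] at hj
  unfold gap
  omega

/-- Every element of `ℕ ∖ β(λ)` below `β_i` is a gap `gap j` with `1 ≤ j ≤ λ_i`: the `λ_i` gaps
`gap 1 < ⋯ < gap λ_i` lie below `β_i`, and there are only `β_i - (ℓ - 1 - i) = λ_i` places for
them, since `β_{i+1}, …, β_{ℓ-1}` lie there too. -/
theorem exists_gap_eq {i c : ℕ} (hi : i < l.parts.length) (hc : c < l.beta i)
    (hcβ : c ∉ l.betaSet) : ∃ j, 1 ≤ j ∧ j ≤ l.parts.getD i 0 ∧ l.gap j = c := by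
  set T := range (l.beta i) \ l.betaSet
  have hgaps : (Icc 1 (l.parts.getD i 0)).image l.gap ⊆ T := by
    simp only [T, subset_iff, mem_image, mem_Icc, mem_sdiff, mem_range]
    rintro _ ⟨j, ⟨hj1, hj⟩, rfl⟩
    exact ⟨l.gap_lt_beta hi hj, l.gap_notMem_betaSet hj1⟩
  have hbelow : (Ioo i l.parts.length).image l.beta ⊆ l.betaSet ∩ range (l.beta i) := by
    simp only [subset_iff, mem_image, mem_Ioo, mem_inter, mem_range]
    rintro _ ⟨k, ⟨hik, hk⟩, rfl⟩
    exact ⟨l.beta_mem_betaSet hk, l.strictAntiOn_beta (hik.trans hk) hk hik⟩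
  have hcardT : #T ≤ l.parts.getD i 0 := by
    have h := card_le_card hbelow
    rw [card_image_of_injOn (l.strictAntiOn_beta.injOn.mono fun k hk => (mem_Ioo.mp hk).2),
      Nat.card_Ioo] at h
    rw [card_sdiff, card_range]
    unfold beta at h ⊢
    omega
  have hcardgaps : #((Icc 1 (l.parts.getD i 0)).image l.gap) = l.parts.getD i 0 := by
    rw [card_image_of_injOn (l.gap_strictMonoOn.injOn.mono fun j hj => (mem_Icc.mp hj).1),
      Nat.card_Icc, Nat.add_sub_cancel]
  have hcT : c ∈ T := mem_sdiff.mpr ⟨mem_range.mpr hc, hcβ⟩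
  rw [← eq_of_subset_of_card_le hgaps (hcardT.trans hcardgaps.ge)] at hcT
  simpa [and_assoc] using hcT

theorem isCore_iff {u : ℕ} (hu : 0 < u) : l.IsCore u ↔ ClosedUnderSub u l.betaSet := by
  constructor
  · intro hcore x hx hux
    by_contra hxu
    obtain ⟨i, hi, rfl⟩ := l.mem_betaSet.mp hx
    obtain ⟨j, hj1, hj, hgap⟩ := l.exists_gap_eq hi (by omega) hxu
    refine hcore i j hi hj1 hj ?_
    rw [l.hook_eq_beta_sub_gap hi hj1 hj, hgap, Nat.sub_sub_self hux]
  · rintro hB i j hi hj1 hj ⟨d, hd⟩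
    rw [l.hook_eq_beta_sub_gap hi hj1 hj] at hd
    have := l.gap_lt_beta hi hj
    apply l.gap_notMem_betaSet hj1
    rw [show l.gap j = l.beta i - u * d by omega]
    exact hB.sub_mul_mem (l.beta_mem_betaSet hi) d (by omega)

theorem distinctParts_iff : l.DistinctParts ↔ ∀ x ∈ l.betaSet, x + 1 ∉ l.betaSet := by
  have hstep : ∀ i (hi : i + 1 < l.parts.length),
      l.parts[i] > l.parts[i + 1] ↔ l.beta (i + 1) + 1 ≠ l.beta i := by
    intro i hi
    have := l.getD_le_getD (by omega : i ≤ i + 1) hi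
    unfold beta
    rw [List.getD_eq_getElem _ _ hi, List.getD_eq_getElem _ _ (by omega)] at *
    omega
  rw [DistinctParts, ← List.isChain_iff_pairwise, List.isChain_iff_getElem]
  constructor
  · intro h x hx hx1
    obtain ⟨k, hk, rfl⟩ := l.mem_betaSet.mp hx
    obtain ⟨i, hi, hik⟩ := l.mem_betaSet.mp hx1
    have hlt : i < k := (l.strictAntiOn_beta.lt_iff_gt hk hi).mp (by omega)
    have := (hstep i (by omega)).mp (h i (by omega))
    have := l.beta_add_le (show i + 1 ≤ k by omega) hk
    have := l.beta_add_le (by omega : i ≤ i + 1) (by omega : i + 1 < l.parts.length)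
    omega
  · intro h i hi
    refine (hstep i hi).mpr fun heq => h _ (l.beta_mem_betaSet (i := i + 1) hi) ?_
    rw [heq]
    exact l.beta_mem_betaSet (by omega)

theorem beta_eq_getD_sort {i : ℕ} (hi : i < l.parts.length) :
    l.beta i = (l.betaSet.sort (· ≤ ·)).getD (l.parts.length - 1 - i) 0 := by
  have h := orderEmbOfFin_unique l.card_betaSet (f := fun k => l.beta k.rev)
    (fun k => l.beta_mem_betaSet k.rev.2)
    (fun a b hab => l.strictAntiOn_beta (Fin.rev b).2 (Fin.rev a).2 (Fin.rev_lt_rev.mpr hab))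
  have := congrFun h ⟨l.parts.length - 1 - i, by omega⟩
  rw [orderEmbOfFin_apply, Fin.getElem_fin] at this
  rw [List.getD_eq_getElem _ _ (by simp [l.card_betaSet]; omega), ← this]
  congr 1
  simp only [Fin.val_rev]
  omega

theorem betaSet_injective : Function.Injective betaSet := by
  intro l l' h
  have hlen : l.parts.length = l'.parts.length := by rw [← card_betaSet, h, card_betaSet]
  ext1
  refine List.ext_getElem hlen fun i hi hi' => ?_
  have hβ := l.beta_eq_getD_sort hi
  rw [h, hlen, ← l'.beta_eq_getD_sort hi'] at hβ
  unfold beta at hβ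
  rw [List.getD_eq_getElem _ _ hi, List.getD_eq_getElem _ _ hi', hlen] at hβ
  omega

def ofBetaSet (B : Finset ℕ) (h0 : 0 ∉ B) : Partn where
  parts := List.ofFn fun k : Fin #B => B.orderEmbOfFin rfl k.rev - k.rev
  pos := by
    simp only [List.mem_ofFn, forall_exists_index]
    rintro _ k rfl
    exact Finset.one_le_orderEmbOfFin_sub_val h0 k.rev
  sorted := List.pairwise_ofFn.mpr fun _ _ hij =>
    Fin.monotone_sub_val_of_strictMono (B.orderEmbOfFin rfl).strictMono (Fin.rev_lt_rev.mpr hij).le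

theorem betaSet_ofBetaSet (B : Finset ℕ) (h0 : 0 ∉ B) : (ofBetaSet B h0).betaSet = B := by
  have hlen : (ofBetaSet B h0).parts.length = #B := List.length_ofFn
  have hβ : ∀ k (hk : k < #B),
      (ofBetaSet B h0).beta k = B.orderEmbOfFin rfl (Fin.rev ⟨k, hk⟩) := by
    intro k hk
    have hget : (ofBetaSet B h0).parts.getD k 0 =
        B.orderEmbOfFin rfl (Fin.rev ⟨k, hk⟩) - (Fin.rev ⟨k, hk⟩ : ℕ) := by
      rw [List.getD_eq_getElem _ _ (hlen ▸ hk)]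
      simp [ofBetaSet]
    have := Finset.one_le_orderEmbOfFin_sub_val h0 (Fin.rev ⟨k, hk⟩)
    rw [beta, hget, hlen]
    simp only [Fin.val_rev] at this ⊢
    omega
  ext x
  rw [mem_betaSet, hlen, ← Finset.mem_coe, ← range_orderEmbOfFin B rfl]
  constructor
  · rintro ⟨k, hk, rfl⟩
    exact ⟨_, (hβ k hk).symm⟩
  · rintro ⟨k, rfl⟩
    exact ⟨k.rev, k.rev.2, by rw [hβ _ k.rev.2]; congr; ext; simp; omega⟩

theorem betaSet_eq_abacus {t : ℕ} (ht : 0 < t) (hB : ClosedUnderSub t l.betaSet) :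
    l.betaSet = abacus t fun r => l.nFn t r :=
  eq_abacus_of_closedUnderSub ht hB l.zero_notMem_betaSet

theorem isCore_and_isCore_and_distinctParts_iff {t m : ℕ} (ht : 2 ≤ t) (hm : 1 ≤ m) :
    (l.IsCore t ∧ l.IsCore (m * t - 1) ∧ l.DistinctParts) ↔
      ClosedUnderSub t l.betaSet ∧ IsAdmissible t m fun r => l.nFn t r := by
  rw [l.isCore_iff (by omega), l.isCore_iff (by have := Nat.mul_le_mul hm ht; omega),
    l.distinctParts_iff]
  refine and_congr_right fun hB => ?_
  rw [isAdmissible_iff_closedUnderSub_and_noConsec ht hm, ← l.betaSet_eq_abacus (by omega) hB]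

end Partn

open Partn

/-- `λ ↦ (n₁(λ), …, n_(t−1)(λ))` is a bijection from `(t, mt−1)`-core partitions with
distinct parts onto sequences `(x₁, …, x_(t−1))` with `xᵢ ≤ m` for `i ≤ t−2`,
`xᵢ·x_(i+1) = 0`, and `x_(t−1) ≤ m−1`. -/
theorem bijection_t_mt_sub_one (t m : ℕ) (ht : 2 ≤ t) (hm : 1 ≤ m) :
    Set.BijOn (fun lam : Partn => fun i : Fin (t - 1) => Partn.nFn t ((i : ℕ) + 1) lam)
      {lam : Partn | (lam.IsCore t ∧ lam.IsCore (m * t - 1) ∧ lam.DistinctParts)}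
      {x : Fin (t - 1) → ℕ | (∀ i : Fin (t - 1), (i : ℕ) + 1 ≤ t - 2 → x i ≤ m) ∧
          (∀ i j : Fin (t - 1), (j : ℕ) = (i : ℕ) + 1 → x i * x j = 0) ∧
          ∀ i : Fin (t - 1), (i : ℕ) + 1 = t - 1 → x i ≤ m - 1} := by
  have hsrc := fun lam : Partn => lam.isCore_and_isCore_and_distinctParts_iff ht hm
  refine ⟨fun lam hlam => (isAdmissible_iff_forall_fin ht _).mp ((hsrc lam).mp hlam).2, ?_, ?_⟩
  · intro lam hlam lam' hlam' h
    refine betaSet_injective ?_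
    rw [lam.betaSet_eq_abacus (by omega) ((hsrc lam).mp hlam).1,
      lam'.betaSet_eq_abacus (by omega) ((hsrc lam').mp hlam').1]
    refine abacus_congr fun r hr0 hrt => ?_
    simpa [Nat.sub_add_cancel hr0] using congrFun h ⟨r - 1, by omega⟩
  · intro x hx
    obtain ⟨n, rfl⟩ : ∃ n : ℕ → ℕ, (fun i : Fin (t - 1) => n (i + 1)) = x :=
      ⟨fun r => if h : r - 1 < t - 1 then x ⟨r - 1, h⟩ else 0, funext fun i => by simp⟩
    set lam := ofBetaSet (abacus t n) zero_notMem_abacus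
    have hcount : ∀ i : Fin (t - 1), lam.nFn t (i + 1) = n (i + 1) := fun i => by
      rw [nFn, betaSet_ofBetaSet]
      exact card_filter_mod_abacus (by omega) (by omega)
    refine ⟨lam, (hsrc lam).mpr ⟨?_, (isAdmissible_iff_forall_fin ht _).mpr ?_⟩, funext hcount⟩
    · rw [betaSet_ofBetaSet]
      exact closedUnderSub_abacus
    · simp only [hcount]
      exact hx
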